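/- arXiv:1511.08598 — 2 statements merged into one kernel-verified Lean document; each statement's English description precedes it below -/
import Mathlib

section
/- Main bucketing lemma: Suppose μ is an (s^α, s^{1-δ})-smooth density on [a,b] with constants α, δ > 0 and smoothness witness β. Fix n ∈ ℕ with n ≥ 2, and partition [a,b] into k ≥ n^{α/δ} equal-length subintervals. Then for each subinterval I, P(X ∈ I) ≤ β·(n^{1/δ} - 1)^{-δ}, and consequently P(X ∈ I) = O(1/n) as n → ∞ (uniformly over the choice of subinterval). -/
open MeasureTheory Set

/-- Main bucketing lemma. If μ is (s^α, s^{1-δ})-smooth on [a,b] with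
witness β, n ≥ 2, and [a,b] is split into k ≥ n^{α/δ} equal subintervals, then each
subinterval has probability at most β·(n^{1/δ}-1)^{-δ}, and consequently the
probability of any subinterval is O(1/n). -/
theorem bucketing_lemma
    (μ : Measure ℝ) [IsProbabilityMeasure μ] (a b : ℝ) (hab : a < b)
    (hsupp : μ (Set.Icc a b) = 1)
    (α δ : ℝ) (hα : 0 < α) (hδ : 0 < δ) (β : ℝ) (hβ : 0 < β)
    (hsmooth : ∀ c₁ c₂ c₃ : ℝ, a ≤ c₁ → c₁ < c₂ → c₂ ≤ c₃ → c₃ ≤ b → ∀ s : ℕ, 0 < s →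
      μ (Set.Icc (c₂ - (c₃ - c₁) / (s : ℝ) ^ α) c₂ ∩ Set.Icc c₁ c₃) / μ (Set.Icc c₁ c₃)
        ≤ ENNReal.ofReal (β * (s : ℝ) ^ (1 - δ) / s)) :
    (∀ n : ℕ, 2 ≤ n → ∀ k : ℕ, (n : ℝ) ^ (α / δ) ≤ k → ∀ j : ℕ, j < k →
      μ (Set.Icc (a + j * (b - a) / k) (a + (j + 1) * (b - a) / k))
        ≤ ENNReal.ofReal (β * ((n : ℝ) ^ (1 / δ) - 1) ^ (-δ)))
    ∧ ∃ C > 0, ∃ N : ℕ, ∀ n : ℕ, N ≤ n → ∀ k : ℕ, (n : ℝ) ^ (α / δ) ≤ k → ∀ j : ℕ, j < k →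
      μ (Set.Icc (a + j * (b - a) / k) (a + (j + 1) * (b - a) / k))
        ≤ ENNReal.ofReal (C / n) := by
  have key : ∀ n : ℕ, 2 ≤ n → ∀ k : ℕ, (n : ℝ) ^ (α / δ) ≤ k → ∀ j : ℕ, j < k →
      μ (Set.Icc (a + j * (b - a) / k) (a + (j + 1) * (b - a) / k))
        ≤ ENNReal.ofReal (β * ((n : ℝ) ^ (1 / δ) - 1) ^ (-δ)) := by
    intro n hn k hk j hj
    have hn1 : (1:ℝ) < (n:ℝ) := by
      have : (2:ℝ) ≤ (n:ℝ) := by exact_mod_cast hn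
      linarith
    have hnpow1 : (1:ℝ) < (n:ℝ) ^ (1/δ) :=
      Real.one_lt_rpow_iff_of_pos (by linarith) |>.mpr (Or.inl ⟨hn1, by positivity⟩)
    set s : ℕ := ⌊(n:ℝ)^(1/δ)⌋₊ with hs_def
    have hs1 : 1 ≤ s := Nat.le_floor (by exact_mod_cast hnpow1.le)
    have hspos : (0:ℝ) < (s:ℝ) := by exact_mod_cast hs1
    have hsr : (s:ℝ) ≤ (n:ℝ)^(1/δ) := Nat.floor_le (by positivity)
    have hslb : (n:ℝ)^(1/δ) - 1 < (s:ℝ) := Nat.sub_one_lt_floor _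
    have hkpos : (0:ℝ) < (k:ℝ) := lt_of_lt_of_le (by positivity) hk
    have hsk : (s:ℝ)^α ≤ (k:ℝ) := by
      have h1 : (s:ℝ)^α ≤ ((n:ℝ)^(1/δ))^α := Real.rpow_le_rpow hspos.le hsr hα.le
      have h2 : ((n:ℝ)^(1/δ))^α = (n:ℝ)^(α/δ) := by
        rw [← Real.rpow_mul (by positivity), one_div_mul_eq_div]
      linarith
    set L := a + (j:ℝ) * (b - a) / k with hL
    set R := a + ((j:ℝ) + 1) * (b - a) / k with hR
    have hbapos : (0:ℝ) < b - a := by linarith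
    have hspowpos : (0:ℝ) < (s:ℝ)^α := by positivity
    have hjk : ((j:ℝ) + 1) ≤ (k:ℝ) := by exact_mod_cast Nat.succ_le_of_lt hj
    have haR : a < R := by
      have : (0:ℝ) < ((j:ℝ)+1)*(b-a)/k := by positivity
      simp only [hR]; linarith
    have hRb : R ≤ b := by
      have : ((j:ℝ)+1) * (b-a) / k ≤ b - a := by
        rw [div_le_iff₀ hkpos]; nlinarith
      simp only [hR]; linarith
    have haL : a ≤ L := by
      have : (0:ℝ) ≤ (j:ℝ)*(b-a)/k := by positivity
      simp only [hL]; linarith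
    have hleft : R - (b - a)/(s:ℝ)^α ≤ L := by
      have h1 : (b-a)/(k:ℝ) ≤ (b-a)/(s:ℝ)^α :=
        div_le_div_of_nonneg_left hbapos.le hspowpos hsk
      have hRL : R - L = (b-a)/k := by
        simp only [hL, hR]; field_simp; ring
      linarith
    have hsub : Set.Icc L R ⊆ Set.Icc (R - (b-a)/(s:ℝ)^α) R ∩ Set.Icc a b := by
      intro x hx
      exact ⟨⟨le_trans hleft hx.1, hx.2⟩, le_trans haL hx.1, le_trans hx.2 hRb⟩
    have hsm := hsmooth a R b le_rfl haR hRb le_rfl s hs1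
    rw [hsupp, div_one] at hsm
    have hμ : μ (Set.Icc L R) ≤ ENNReal.ofReal (β * (s:ℝ)^(1-δ)/(s:ℝ)) :=
      le_trans (measure_mono hsub) hsm
    refine le_trans hμ (ENNReal.ofReal_le_ofReal ?_)
    have hc : (s:ℝ)^(1-δ)/(s:ℝ) = (s:ℝ)^(-δ) := by
      rw [show (1-δ) = -δ + 1 by ring, Real.rpow_add hspos, Real.rpow_one,
        mul_div_assoc, div_self hspos.ne', mul_one]
    rw [mul_div_assoc, hc]
    have hb0 : (0:ℝ) < (n:ℝ)^(1/δ) - 1 := by linarith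
    have hmono : (s:ℝ)^(-δ) ≤ ((n:ℝ)^(1/δ) - 1)^(-δ) :=
      Real.rpow_le_rpow_of_nonpos hb0 hslb.le (neg_nonpos.mpr hδ.le)
    exact mul_le_mul_of_nonneg_left hmono hβ.le
  refine ⟨key, β * (2:ℝ)^δ, by positivity, ⌈(2:ℝ)^δ⌉₊ + 2, ?_⟩
  intro n hn k hk j hj
  have hn2 : 2 ≤ n := by omega
  refine le_trans (key n hn2 k hk j hj) (ENNReal.ofReal_le_ofReal ?_)
  have hnpos : (0:ℝ) < (n:ℝ) := by
    have : (2:ℝ) ≤ (n:ℝ) := by exact_mod_cast hn2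
    linarith
  have h2d : (2:ℝ)^δ ≤ (n:ℝ) := by
    have h1 : ((⌈(2:ℝ)^δ⌉₊ : ℕ) : ℝ) ≤ (n:ℝ) := by
      exact_mod_cast le_trans (Nat.le_add_right _ 2) hn
    exact le_trans (Nat.le_ceil _) h1
  set x := (n:ℝ)^(1/δ) with hx
  have hx2 : (2:ℝ) ≤ x := by
    calc (2:ℝ) = ((2:ℝ)^δ)^(1/δ) := by
          rw [← Real.rpow_mul (by norm_num), mul_one_div, div_self hδ.ne', Real.rpow_one]
      _ ≤ x := Real.rpow_le_rpow (by positivity) h2d (by positivity)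
  have hxhalf : (0:ℝ) < x/2 := by linarith
  have hhalf : x/2 ≤ x - 1 := by linarith
  have h1 : (x-1)^(-δ) ≤ (x/2)^(-δ) :=
    Real.rpow_le_rpow_of_nonpos hxhalf hhalf (neg_nonpos.mpr hδ.le)
  have h2 : (x/2)^(-δ) = (2:ℝ)^δ * x^(-δ) := by
    rw [Real.div_rpow (by linarith : (0:ℝ) ≤ x) (by norm_num : (0:ℝ) ≤ 2),
      Real.rpow_neg (by norm_num : (0:ℝ) ≤ 2), div_eq_mul_inv, inv_inv, mul_comm]
  have h3 : x^(-δ) = 1/(n:ℝ) := by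
    rw [hx, ← Real.rpow_mul hnpos.le, one_div_mul_eq_div, neg_div, div_self hδ.ne',
      Real.rpow_neg_one, one_div]
  calc β * (x - 1)^(-δ) ≤ β * ((2:ℝ)^δ * (1/(n:ℝ))) := by
        rw [← h3, ← h2]; exact mul_le_mul_of_nonneg_left h1 hβ.le
    _ = β * (2:ℝ)^δ / n := by ring
end

section
/- Under the hypotheses of the bucketing lemma, if n independent keys are drawn from an (s^α, s^{1-δ})-smooth distribution on [a,b] and the domain is split into at least n^{α/δ} equal-length intervals, then the expected number of keys falling in any fixed interval is O(1), i.e., bounded by a constant depending only on α, δ, β (not on n). -/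
/-!
Take the scale `s = ⌊n ^ (1/δ)⌋`, so that `s ^ α ≤ n ^ (α/δ) ≤ k` and `n ≤ (2 s) ^ δ`. A bucket
then has length at most `(b - a) / s ^ α`, and smoothness applied with `c₁ = a`, `c₃ = b` bounds
its mass by `β s ^ (1 - δ) / s = β / s ^ δ ≤ 2 ^ δ β / n`. By linearity of expectation the
expected occupancy is `n · μ(bucket) ≤ 2 ^ δ β`.
-/

open MeasureTheory Set

/-- `(f, g)`-smoothness on `[a, b]`; the quotient is the conditional probability of the window
`[c₂ - (c₃ - c₁) / f s, c₂]` given `[c₁, c₃]`. -/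
def IsSmooth (μ : Measure ℝ) (a b : ℝ) (f g : ℕ → ℝ) : Prop :=
  ∀ c₁ c₂ c₃ : ℝ, a ≤ c₁ → c₁ < c₂ → c₂ ≤ c₃ → c₃ ≤ b → ∀ s : ℕ, 0 < s →
    μ (Icc (c₂ - (c₃ - c₁) / f s) c₂ ∩ Icc c₁ c₃) / μ (Icc c₁ c₃) ≤ ENNReal.ofReal (g s / s)

namespace IsSmooth

variable {μ : Measure ℝ} {a b : ℝ} {f g : ℕ → ℝ}

theorem measure_Icc_le (hμ : IsSmooth μ a b f g) (hsupp : μ (Icc a b) = 1)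
    {lo hi : ℝ} (hlo : a ≤ lo) (hahi : a < hi) (hhib : hi ≤ b) {s : ℕ} (hs : 0 < s)
    (hlen : hi - lo ≤ (b - a) / f s) :
    μ (Icc lo hi) ≤ ENNReal.ofReal (g s / s) := by
  have hsub : Icc lo hi ⊆ Icc (hi - (b - a) / f s) hi ∩ Icc a b :=
    fun y ⟨hly, hyh⟩ ↦ ⟨⟨by linarith, hyh⟩, ⟨by linarith, by linarith⟩⟩
  calc μ (Icc lo hi) ≤ μ (Icc (hi - (b - a) / f s) hi ∩ Icc a b) := measure_mono hsub
    _ ≤ _ := by simpa [hsupp] using hμ a hi b le_rfl hahi hhib le_rfl s hs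

theorem measure_bucket_le (hμ : IsSmooth μ a b f g) (hsupp : μ (Icc a b) = 1) (hab : a < b)
    {j k s : ℕ} (hj : j < k) (hs : 0 < s) (hfs : 0 < f s) (hfk : f s ≤ k) :
    μ (Icc (a + j * (b - a) / k) (a + (j + 1) * (b - a) / k)) ≤ ENNReal.ofReal (g s / s) := by
  have hk : (0 : ℝ) < k := hfs.trans_le hfk
  have hjk : (j : ℝ) + 1 ≤ k := by exact_mod_cast hj
  refine hμ.measure_Icc_le hsupp ?_ ?_ ?_ hs ?_
  · have : 0 ≤ j * (b - a) / k := by have := hab.le; positivity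
    linarith
  · have : 0 < (j + 1) * (b - a) / k := by have := sub_pos.2 hab; positivity
    linarith
  · have : (j + 1) * (b - a) / k ≤ b - a := by
      rw [div_le_iff₀ hk]; nlinarith
    linarith
  · calc _ = (b - a) / k := by ring
      _ ≤ (b - a) / f s := div_le_div_of_nonneg_left (by linarith) hfs hfk

end IsSmooth

-- The witness is `⌊x ^ (1 / δ)⌋₊`.
theorem exists_nat_rpow_le_le_two_pow_mul {x δ : ℝ} (hx : 1 ≤ x) (hδ : 0 < δ) :
    ∃ s : ℕ, 0 < s ∧ (s : ℝ) ^ δ ≤ x ∧ x ≤ 2 ^ δ * (s : ℝ) ^ δ := by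
  set y := x ^ (1 / δ)
  have hy : 1 ≤ y := Real.one_le_rpow hx (by positivity)
  have hyx : y ^ δ = x := by
    rw [← Real.rpow_mul (by linarith), one_div_mul_cancel hδ.ne', Real.rpow_one]
  have hs : 0 < ⌊y⌋₊ := Nat.floor_pos.2 hy
  refine ⟨⌊y⌋₊, hs, ?_, ?_⟩
  · rw [← hyx]
    exact Real.rpow_le_rpow (by positivity) (Nat.floor_le (by linarith)) hδ.le
  · have hy2 : y ≤ 2 * ⌊y⌋₊ := by
      have := Nat.lt_floor_add_one y
      have : (1 : ℝ) ≤ ⌊y⌋₊ := by exact_mod_cast hs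
      linarith
    rw [← Real.mul_rpow (by norm_num) (by positivity), ← hyx]
    exact Real.rpow_le_rpow (by linarith) hy2 hδ.le

theorem integral_sum_indicator_one_comp {α Ω ι : Type*} [MeasurableSpace α] [MeasurableSpace Ω]
    [Fintype ι] {P : Measure Ω} [IsFiniteMeasure P] {μ : Measure α} (hμ : μ ≠ 0)
    {X : ι → Ω → α} (hX : ∀ i, P.map (X i) = μ) {I : Set α} (hI : MeasurableSet I) :
    ∫ ω, ∑ i, I.indicator (fun _ ↦ (1 : ℝ)) (X i ω) ∂P = Fintype.card ι * μ.real I := by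
  have hXm (i : ι) : AEMeasurable (X i) P := .of_map_ne_zero (hX i ▸ hμ)
  have hind : StronglyMeasurable (I.indicator fun _ ↦ (1 : ℝ)) :=
    stronglyMeasurable_const.indicator hI
  have hint (i : ι) : Integrable (fun ω ↦ I.indicator (fun _ ↦ (1 : ℝ)) (X i ω)) P :=
    (integrable_map_measure hind.aestronglyMeasurable (hXm i)).1
      ((integrable_const 1).indicator hI)
  rw [integral_finsetSum _ fun i _ ↦ hint i]
  simp_rw [← integral_map (hXm _) hind.aestronglyMeasurable, hX, integral_indicator_const _ hI]
  simp

theorem expected_bucket_occupancy_general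
    (μ : Measure ℝ) (a b : ℝ) (hab : a < b)
    (hsupp : μ (Set.Icc a b) = 1)
    (α δ : ℝ) (hα : 0 < α) (hδ : 0 < δ) (β : ℝ) (hβ : 0 < β)
    (hsmooth : ∀ c₁ c₂ c₃ : ℝ, a ≤ c₁ → c₁ < c₂ → c₂ ≤ c₃ → c₃ ≤ b → ∀ s : ℕ, 0 < s →
      μ (Set.Icc (c₂ - (c₃ - c₁) / (s : ℝ) ^ α) c₂ ∩ Set.Icc c₁ c₃) / μ (Set.Icc c₁ c₃)
        ≤ ENNReal.ofReal (β * (s : ℝ) ^ (1 - δ) / s)) :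
    ∃ C > 0, ∀ n : ℕ, 2 ≤ n → ∀ k : ℕ, (n : ℝ) ^ (α / δ) ≤ k → ∀ j : ℕ, j < k →
      ∀ (Ω : Type) (_ : MeasurableSpace Ω) (P : Measure Ω), IsProbabilityMeasure P →
        ∀ X : Fin n → Ω → ℝ, ProbabilityTheory.iIndepFun X P →
          (∀ i, Measure.map (X i) P = μ) →
          (∫ ω, (∑ i : Fin n,
              (Set.Icc (a + j * (b - a) / k) (a + (j + 1) * (b - a) / k)).indicator
                (fun _ => (1 : ℝ)) (X i ω)) ∂P) ≤ C := by
  refine ⟨β * 2 ^ δ, by positivity, fun n hn k hk j hj Ω _ P _ X _ hX ↦ ?_⟩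
  have hsm : IsSmooth μ a b (fun s ↦ (s : ℝ) ^ α) (fun s ↦ β * (s : ℝ) ^ (1 - δ)) := hsmooth
  obtain ⟨s, hs, hsn, hns⟩ := exists_nat_rpow_le_le_two_pow_mul (x := n) (by norm_cast; omega) hδ
  have hs' : (0 : ℝ) < s := by exact_mod_cast hs
  have hsk : (s : ℝ) ^ α ≤ k := calc
    (s : ℝ) ^ α = ((s : ℝ) ^ δ) ^ (α / δ) := by
      rw [← Real.rpow_mul hs'.le, mul_div_cancel₀ _ hδ.ne']
    _ ≤ (n : ℝ) ^ (α / δ) := Real.rpow_le_rpow (by positivity) hsn (by positivity)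
    _ ≤ k := hk
  have hbucket := hsm.measure_bucket_le hsupp hab hj hs (by positivity) hsk
  have hμ : μ ≠ 0 := by rintro rfl; simp at hsupp
  rw [integral_sum_indicator_one_comp hμ hX measurableSet_Icc, Fintype.card_fin]
  have hμI := ENNReal.toReal_le_of_le_ofReal (by positivity) hbucket
  calc (n : ℝ) * μ.real _ ≤ n * (β * (s : ℝ) ^ (1 - δ) / s) := by gcongr; exact hμI
    _ = β * (n / (s : ℝ) ^ δ) := by
      rw [Real.rpow_sub hs', Real.rpow_one]; field_simp
    _ ≤ β * 2 ^ δ := by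
      gcongr; rw [div_le_iff₀ (by positivity)]; exact hns

/-- If n independent keys are drawn from an (s^α, s^{1-δ})-smooth
distribution on [a,b] and the domain is split into at least n^{α/δ} equal-length
intervals, then the expected number of keys in any fixed interval is bounded by a
constant depending only on α, δ, β. -/
theorem expected_bucket_occupancy
    (μ : Measure ℝ) [IsProbabilityMeasure μ] (a b : ℝ) (hab : a < b)
    (hsupp : μ (Set.Icc a b) = 1)
    (α δ : ℝ) (hα : 0 < α) (hδ : 0 < δ) (β : ℝ) (hβ : 0 < β)
    (hsmooth : ∀ c₁ c₂ c₃ : ℝ, a ≤ c₁ → c₁ < c₂ → c₂ ≤ c₃ → c₃ ≤ b → ∀ s : ℕ, 0 < s →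
      μ (Set.Icc (c₂ - (c₃ - c₁) / (s : ℝ) ^ α) c₂ ∩ Set.Icc c₁ c₃) / μ (Set.Icc c₁ c₃)
        ≤ ENNReal.ofReal (β * (s : ℝ) ^ (1 - δ) / s)) :
    ∃ C > 0, ∀ n : ℕ, 2 ≤ n → ∀ k : ℕ, (n : ℝ) ^ (α / δ) ≤ k → ∀ j : ℕ, j < k →
      ∀ (Ω : Type) (_ : MeasurableSpace Ω) (P : Measure Ω), IsProbabilityMeasure P →
        ∀ X : Fin n → Ω → ℝ, ProbabilityTheory.iIndepFun X P →
          (∀ i, Measure.map (X i) P = μ) →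
          (∫ ω, (∑ i : Fin n,
              (Set.Icc (a + j * (b - a) / k) (a + (j + 1) * (b - a) / k)).indicator
                (fun _ => (1 : ℝ)) (X i ω)) ∂P) ≤ C :=
  expected_bucket_occupancy_general μ a b hab hsupp α δ hα hδ β hβ hsmooth
end
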